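/- arXiv:2403.09031 — 2 statements merged into one kernel-verified Lean document; each statement's English description precedes it below -/
import Mathlib

section
/- Lemma 4 (existence of a minimizer of the distance metric). Let Z, Z⋆ ∈ ℂ^{n_s×r} with s := σ_min(Z⋆) > 0. Suppose there exists an invertible P̂ ∈ ℂ^{r×r} such that, setting Ẑ₁ = Z⋆P̂ and Ẑ₂ = Z⋆P̂^{−T}, one has √(‖Z − Ẑ₁‖_F² + ‖Z − Ẑ₂‖_F²) ≤ ε·s for some ε with 0 ≤ ε ≤ √2/8, and moreover σ_min(Ẑ₁) ≥ (√2/2)·s or σ_min(Ẑ₂) ≥ (√2/2)·s. Then the infimum defining dist_P(Z, Z⋆) is attained: there exists an invertible P₀ ∈ ℂ^{r×r} with √(‖Z − Z⋆P₀‖_F² + ‖Z − Z⋆P₀^{−T}‖_F²) = dist_P(Z, Z⋆). -/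
open Matrix
open scoped BigOperators

noncomputable section

def frobNorm {m n : ℕ} (A : Matrix (Fin m) (Fin n) ℂ) : ℝ :=
  Real.sqrt (∑ i, ∑ j, ‖A i j‖ ^ 2)

def vecNorm {n : ℕ} (v : Fin n → ℂ) : ℝ :=
  Real.sqrt (∑ i, ‖v i‖ ^ 2)

def sigmaMin {m n : ℕ} (A : Matrix (Fin m) (Fin n) ℂ) : ℝ :=
  sInf {t : ℝ | ∃ v : Fin n → ℂ, vecNorm v = 1 ∧ t = vecNorm (A.mulVec v)}

def distP {ns r : ℕ} (Z Zs : Matrix (Fin ns) (Fin r) ℂ) : ℝ :=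
  sInf {t : ℝ | ∃ P : Matrix (Fin r) (Fin r) ℂ, IsUnit P ∧
    t = Real.sqrt (frobNorm (Z - Zs * P) ^ 2 + frobNorm (Z - Zs * (P⁻¹)ᵀ) ^ 2)}

/-!
Since `σ_min(Z⋆) > 0`, `‖Z⋆ X‖_F ≥ σ_min(Z⋆) ‖X‖_F` for every `X`, so
`‖P‖_F ≤ (‖Z - Z⋆ P‖_F + ‖Z‖_F) / σ_min(Z⋆)`: the objective is coercive in `(P, P⁻ᵀ)`.
The set of invertible `P` is not closed, but the set of pairs `(P, Q)` with `P Qᵀ = 1` is, and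
it is exactly the set of pairs `(P, P⁻ᵀ)`. A continuous coercive function on a closed subset of a
finite-dimensional space attains its infimum.
-/

lemma vecNorm_eq_norm {n : ℕ} (v : Fin n → ℂ) : vecNorm v = ‖WithLp.toLp 2 v‖ := by
  rw [EuclideanSpace.norm_eq]
  rfl

lemma vecNorm_smul {n : ℕ} (c : ℂ) (v : Fin n → ℂ) : vecNorm (c • v) = ‖c‖ * vecNorm v := by
  rw [vecNorm_eq_norm, vecNorm_eq_norm, WithLp.toLp_smul, norm_smul]

lemma sigmaMin_nonneg {m n : ℕ} (A : Matrix (Fin m) (Fin n) ℂ) : 0 ≤ sigmaMin A :=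
  Real.sInf_nonneg (by rintro _ ⟨v, -, rfl⟩; exact Real.sqrt_nonneg _)

lemma sigmaMin_mul_vecNorm_le {m n : ℕ} (A : Matrix (Fin m) (Fin n) ℂ) (v : Fin n → ℂ) :
    sigmaMin A * vecNorm v ≤ vecNorm (A *ᵥ v) := by
  rcases eq_or_ne v 0 with rfl | hv
  · simp [vecNorm]
  have hpos : 0 < vecNorm v := by
    rw [vecNorm_eq_norm, norm_pos_iff]
    simpa using hv
  have hnorm : ‖(vecNorm v : ℂ)⁻¹‖ = (vecNorm v)⁻¹ := by
    rw [norm_inv, Complex.norm_real, Real.norm_of_nonneg hpos.le]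
  have hu : vecNorm ((vecNorm v : ℂ)⁻¹ • v) = 1 := by
    rw [vecNorm_smul, hnorm, inv_mul_cancel₀ hpos.ne']
  have hle : sigmaMin A ≤ vecNorm (A *ᵥ ((vecNorm v : ℂ)⁻¹ • v)) :=
    csInf_le ⟨0, by rintro _ ⟨w, -, rfl⟩; exact Real.sqrt_nonneg _⟩ ⟨_, hu, rfl⟩
  rwa [mulVec_smul, vecNorm_smul, hnorm, inv_mul_eq_div, le_div_iff₀ hpos] at hle

lemma frobNorm_sq_eq_sum_vecNorm_sq {m n : ℕ} (X : Matrix (Fin m) (Fin n) ℂ) :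
    frobNorm X ^ 2 = ∑ j, vecNorm (Xᵀ j) ^ 2 := by
  simp only [frobNorm, vecNorm, Real.sq_sqrt (Finset.sum_nonneg fun _ _ => sq_nonneg _),
    Real.sq_sqrt (Finset.sum_nonneg fun _ _ => Finset.sum_nonneg fun _ _ => sq_nonneg _)]
  exact Finset.sum_comm

lemma sigmaMin_mul_frobNorm_le {m n k : ℕ} (A : Matrix (Fin m) (Fin n) ℂ)
    (X : Matrix (Fin n) (Fin k) ℂ) : sigmaMin A * frobNorm X ≤ frobNorm (A * X) := by
  have hcol : ∀ j, (A * X)ᵀ j = A *ᵥ Xᵀ j := fun j => by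
    ext i
    simp [mul_apply, mulVec, dotProduct]
  have hsq : (sigmaMin A * frobNorm X) ^ 2 ≤ frobNorm (A * X) ^ 2 := by
    rw [mul_pow, frobNorm_sq_eq_sum_vecNorm_sq, frobNorm_sq_eq_sum_vecNorm_sq, Finset.mul_sum]
    refine Finset.sum_le_sum fun j _ => ?_
    rw [← mul_pow, hcol]
    exact pow_le_pow_left₀ (mul_nonneg (sigmaMin_nonneg A) (Real.sqrt_nonneg _))
      (sigmaMin_mul_vecNorm_le A _) 2
  exact (pow_le_pow_iff_left₀ (mul_nonneg (sigmaMin_nonneg A) (Real.sqrt_nonneg _))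
    (Real.sqrt_nonneg _) two_ne_zero).1 hsq

@[fun_prop]
lemma continuous_frobNorm {m n : ℕ} : Continuous (frobNorm : Matrix (Fin m) (Fin n) ℂ → ℝ) := by
  unfold frobNorm
  fun_prop

def alignPairs (r : ℕ) : Set (Matrix (Fin r) (Fin r) ℂ × Matrix (Fin r) (Fin r) ℂ) :=
  {PQ | PQ.1 * PQ.2ᵀ = 1}

def alignCost {ns r : ℕ} (Z Zs : Matrix (Fin ns) (Fin r) ℂ)
    (PQ : Matrix (Fin r) (Fin r) ℂ × Matrix (Fin r) (Fin r) ℂ) : ℝ :=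
  Real.sqrt (frobNorm (Z - Zs * PQ.1) ^ 2 + frobNorm (Z - Zs * PQ.2) ^ 2)

lemma alignPairs_eq_image (r : ℕ) :
    alignPairs r = (fun P => (P, (P⁻¹)ᵀ)) '' {P | IsUnit P} := by
  ext ⟨P, Q⟩
  simp only [alignPairs, Set.mem_ofPred_eq, Set.mem_image, Prod.mk.injEq]
  constructor
  · intro h
    refine ⟨P, (isUnit_iff_isUnit_det P).2 (isUnit_det_of_right_inverse h), rfl, ?_⟩
    rw [inv_eq_right_inv h, transpose_transpose]
  · rintro ⟨P, hP, rfl, rfl⟩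
    rw [transpose_transpose, mul_nonsing_inv P ((isUnit_iff_isUnit_det P).1 hP)]

lemma isClosed_alignPairs (r : ℕ) : IsClosed (alignPairs r) :=
  isClosed_eq (by fun_prop) continuous_const

lemma continuous_alignCost {ns r : ℕ} (Z Zs : Matrix (Fin ns) (Fin r) ℂ) :
    Continuous (alignCost Z Zs) := by
  unfold alignCost
  fun_prop

lemma distP_eq_sInf_alignCost {ns r : ℕ} (Z Zs : Matrix (Fin ns) (Fin r) ℂ) :
    distP Z Zs = sInf (alignCost Z Zs '' alignPairs r) := by
  rw [alignPairs_eq_image, Set.image_image, distP]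
  congr 1
  ext t
  simp [alignCost, eq_comm]

lemma frobNorm_le_alignCost_fst {ns r : ℕ} (Z Zs : Matrix (Fin ns) (Fin r) ℂ)
    (PQ : Matrix (Fin r) (Fin r) ℂ × Matrix (Fin r) (Fin r) ℂ) :
    frobNorm (Z - Zs * PQ.1) ≤ alignCost Z Zs PQ :=
  Real.le_sqrt_of_sq_le (le_add_of_nonneg_right (sq_nonneg _))

lemma frobNorm_le_alignCost_snd {ns r : ℕ} (Z Zs : Matrix (Fin ns) (Fin r) ℂ)
    (PQ : Matrix (Fin r) (Fin r) ℂ × Matrix (Fin r) (Fin r) ℂ) :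
    frobNorm (Z - Zs * PQ.2) ≤ alignCost Z Zs PQ :=
  Real.le_sqrt_of_sq_le (le_add_of_nonneg_left (sq_nonneg _))

section Frobenius

attribute [local instance] Matrix.frobeniusNormedAddCommGroup Matrix.frobeniusNormedSpace

lemma frobNorm_eq_norm {m n : ℕ} (A : Matrix (Fin m) (Fin n) ℂ) : frobNorm A = ‖A‖ := by
  rw [frobenius_norm_def, frobNorm, Real.sqrt_eq_rpow]
  norm_num

lemma frobNorm_le_of_sigmaMin_pos {m n k : ℕ} {A : Matrix (Fin m) (Fin n) ℂ}
    (hA : 0 < sigmaMin A) (B : Matrix (Fin m) (Fin k) ℂ) (X : Matrix (Fin n) (Fin k) ℂ) :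
    frobNorm X ≤ (frobNorm (B - A * X) + frobNorm B) / sigmaMin A := by
  rw [le_div_iff₀ hA, mul_comm]
  calc sigmaMin A * frobNorm X ≤ frobNorm (A * X) := sigmaMin_mul_frobNorm_le A X
    _ = ‖B - (B - A * X)‖ := by rw [sub_sub_cancel, frobNorm_eq_norm]
    _ ≤ frobNorm (B - A * X) + frobNorm B := by
      rw [frobNorm_eq_norm, frobNorm_eq_norm, add_comm]
      exact norm_sub_le _ _

lemma IsClosed.exists_isMinOn_of_isBounded {α β : Type*} [PseudoMetricSpace α] [ProperSpace α]
    [LinearOrder β] [TopologicalSpace β] [OrderClosedTopology β] {f : α → β} {s : Set α}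
    (hs : IsClosed s) (hf : Continuous f) {x₀ : α} (hx₀ : x₀ ∈ s)
    (hbdd : Bornology.IsBounded (s ∩ {x | f x ≤ f x₀})) : ∃ x ∈ s, IsMinOn f s x := by
  have hK : IsCompact (s ∩ {x | f x ≤ f x₀}) :=
    Metric.isCompact_of_isClosed_isBounded (hs.inter (_root_.isClosed_le hf continuous_const)) hbdd
  obtain ⟨x, ⟨hxs, hxf⟩, hmin⟩ := hK.exists_isMinOn ⟨x₀, hx₀, le_refl (f x₀)⟩ hf.continuousOn
  refine ⟨x, hxs, fun y hy => ?_⟩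
  by_cases hy₀ : f y ≤ f x₀
  · exact hmin ⟨hy, hy₀⟩
  · exact hxf.trans (le_of_not_ge hy₀)

lemma isBounded_alignCost_le {ns r : ℕ} (Z : Matrix (Fin ns) (Fin r) ℂ)
    {Zs : Matrix (Fin ns) (Fin r) ℂ} (hs : 0 < sigmaMin Zs) (c : ℝ) :
    Bornology.IsBounded {PQ | alignCost Z Zs PQ ≤ c} := by
  refine (Metric.isBounded_closedBall (x := 0) (r := (c + frobNorm Z) / sigmaMin Zs)).subset ?_
  intro PQ hPQ
  have hbound : ∀ X : Matrix (Fin r) (Fin r) ℂ,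
      frobNorm (Z - Zs * X) ≤ c → ‖X‖ ≤ (c + frobNorm Z) / sigmaMin Zs := by
    intro X hX
    rw [← frobNorm_eq_norm]
    exact (frobNorm_le_of_sigmaMin_pos hs Z X).trans (by gcongr)
  rw [mem_closedBall_zero_iff, norm_prod_le_iff]
  exact ⟨hbound _ ((frobNorm_le_alignCost_fst Z Zs PQ).trans hPQ),
    hbound _ ((frobNorm_le_alignCost_snd Z Zs PQ).trans hPQ)⟩

lemma exists_isMinOn_alignCost {ns r : ℕ} (Z : Matrix (Fin ns) (Fin r) ℂ)
    {Zs : Matrix (Fin ns) (Fin r) ℂ} (hs : 0 < sigmaMin Zs) :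
    ∃ PQ ∈ alignPairs r, IsMinOn (alignCost Z Zs) (alignPairs r) PQ :=
  (isClosed_alignPairs r).exists_isMinOn_of_isBounded (continuous_alignCost Z Zs)
    (x₀ := (1, 1)) (by simp [alignPairs])
    ((isBounded_alignCost_le Z hs _).subset Set.inter_subset_right)

end Frobenius

theorem distP_minimizer_exists_general (ns r : ℕ) (Z Zs : Matrix (Fin ns) (Fin r) ℂ)
    (hs : 0 < sigmaMin Zs) :
    ∃ P₀ : Matrix (Fin r) (Fin r) ℂ, IsUnit P₀ ∧
      Real.sqrt (frobNorm (Z - Zs * P₀) ^ 2 + frobNorm (Z - Zs * (P₀⁻¹)ᵀ) ^ 2)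
        = distP Z Zs := by
  obtain ⟨PQ, hPQ, hmin⟩ := exists_isMinOn_alignCost Z hs
  have hleast : IsLeast (alignCost Z Zs '' alignPairs r) (alignCost Z Zs PQ) :=
    ⟨Set.mem_image_of_mem _ hPQ, Set.forall_mem_image.2 hmin⟩
  rw [alignPairs_eq_image] at hPQ
  obtain ⟨P₀, hP₀, rfl⟩ := hPQ
  exact ⟨P₀, hP₀, by rw [distP_eq_sInf_alignCost, hleast.csInf_eq]; rfl⟩

/-- Lemma 4: existence of a minimizer of the distance metric `dist_P`. -/
theorem distP_minimizer_exists (ns r : ℕ) (Z Zs : Matrix (Fin ns) (Fin r) ℂ)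
    (hs : 0 < sigmaMin Zs) (ε : ℝ) (hε0 : 0 ≤ ε) (hε : ε ≤ Real.sqrt 2 / 8)
    (Phat : Matrix (Fin r) (Fin r) ℂ) (hPhat : IsUnit Phat)
    (hnear : Real.sqrt (frobNorm (Z - Zs * Phat) ^ 2
        + frobNorm (Z - Zs * (Phat⁻¹)ᵀ) ^ 2) ≤ ε * sigmaMin Zs)
    (hcond : sigmaMin (Zs * Phat) ≥ Real.sqrt 2 / 2 * sigmaMin Zs
        ∨ sigmaMin (Zs * (Phat⁻¹)ᵀ) ≥ Real.sqrt 2 / 2 * sigmaMin Zs) :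
    ∃ P₀ : Matrix (Fin r) (Fin r) ℂ, IsUnit P₀ ∧
      Real.sqrt (frobNorm (Z - Zs * P₀) ^ 2 + frobNorm (Z - Zs * (P₀⁻¹)ᵀ) ^ 2)
        = distP Z Zs :=
  distP_minimizer_exists_general ns r Z Zs hs
end
end

section
/- Lemma 8 (Hankel sampling concentration). There exist universal constants c₄, c₅ > 0 such that the following holds. Let n_s, r ≥ 1, n = 2n_s − 1, let m ≥ c₅·log n, and let a₁, …, a_m be i.i.d. random indices, each uniform on {0,…,n−1}. Then for all fixed A, B, C, D ∈ ℂ^{n_s×r}, with probability at least 1 − n⁻², | (n/m)·Σ_{k=1}^{m} ⟨A·Bᵀ, H_{a_k}⟩·⟨H_{a_k}, C·Dᵀ⟩ − Σ_{a=0}^{n−1} ⟨A·Bᵀ, H_a⟩·⟨H_a, C·Dᵀ⟩ | ≤ c₄·√(n²·log(n)/m) · min(‖A‖_F‖B‖_{2,∞}, ‖A‖_{2,∞}‖B‖_F) · min(‖C‖_F‖D‖_{2,∞}, ‖C‖_{2,∞}‖D‖_F). (The left-hand side equals |⟨𝒢(p⁻¹P_Ω̂ − I)𝒢*(ABᵀ),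 CDᵀ⟩| in the sampling-with-replacement model with p = m/n.) -/
open Matrix
open scoped BigOperators Classical


noncomputable section

/-- `‖A‖_{2,∞}`: the largest ℓ₂ norm of the rows of `A`. -/
def norm2inf {m n : ℕ} (A : Matrix (Fin m) (Fin n) ℂ) : ℝ :=
  ⨆ i, vecNorm (A i)

/-- `w_a`: the length of the `a`-th skew diagonal of an `n_s × n_s` matrix. -/
def hw (ns : ℕ) (a : ℕ) : ℕ :=
  (Finset.univ.filter (fun p : Fin ns × Fin ns => (p.1 : ℕ) + (p.2 : ℕ) = a)).card

/-- The Hankel basis matrix `H_a`. -/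
def hankelBasis (ns : ℕ) (a : ℕ) : Matrix (Fin ns) (Fin ns) ℂ :=
  fun i j => if (i : ℕ) + (j : ℕ) = a then ((1 / Real.sqrt (hw ns a) : ℝ) : ℂ) else 0

/-- The matrix inner product `⟨X, Y⟩ = tr(XᴴY)`. -/
def innerM {m n : ℕ} (X Y : Matrix (Fin m) (Fin n) ℂ) : ℂ :=
  Matrix.trace (Xᴴ * Y)

/-!
Each coefficient `⟨ABᵀ, H_a⟩` is a normalised sum over the `a`-th skew diagonal, so by
Cauchy–Schwarz its square is at most the sum of `|(ABᵀ)ᵢⱼ|²` over that diagonal; as a skew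
diagonal meets each row and each column at most once, this is at most both
`(‖A‖_F ‖B‖_{2,∞})²` and `(‖A‖_{2,∞} ‖B‖_F)²`. Hence the summands
`X a = ⟨ABᵀ, H_a⟩⟨H_a, CDᵀ⟩` are bounded by the product `b` of the two minima, and the claim
is a concentration bound for `m` uniform samples of a bounded function. After centring `X`, a
Chernoff bound (with `eˣ ≤ 1 + x + x²` for `|x| ≤ 1`) on the real and imaginary parts shows that
the deviation exceeds `16 √(n² log n / m) b` for at most `4 n⁻⁴ ≤ n⁻²` of the sample tuples
once `m ≥ 4 log n`.
-/

section HankelCoefficients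

variable {ns r : ℕ}

lemma vecNorm_le_norm2inf (A : Matrix (Fin ns) (Fin r) ℂ) (i : Fin ns) :
    vecNorm (A i) ≤ norm2inf A :=
  le_ciSup (f := fun i => vecNorm (A i)) (Set.finite_range _).bddAbove i

lemma norm2inf_nonneg (A : Matrix (Fin ns) (Fin r) ℂ) : 0 ≤ norm2inf A :=
  Real.iSup_nonneg fun _ => Real.sqrt_nonneg _

lemma frobNorm_sq (A : Matrix (Fin ns) (Fin r) ℂ) :
    frobNorm A ^ 2 = ∑ i, vecNorm (A i) ^ 2 := by
  rw [frobNorm, Real.sq_sqrt (by positivity)]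
  exact Finset.sum_congr rfl fun i _ => by rw [vecNorm, Real.sq_sqrt (by positivity)]

lemma norm_mul_transpose_apply_le (A B : Matrix (Fin ns) (Fin r) ℂ) (i j : Fin ns) :
    ‖(A * Bᵀ) i j‖ ≤ vecNorm (A i) * vecNorm (B j) :=
  calc ‖(A * Bᵀ) i j‖ = ‖∑ l, A i l * B j l‖ := rfl
    _ ≤ ∑ l, ‖A i l‖ * ‖B j l‖ := (norm_sum_le _ _).trans_eq (by simp only [norm_mul])
    _ ≤ vecNorm (A i) * vecNorm (B j) := Real.sum_mul_le_sqrt_mul_sqrt _ _ _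

lemma innerM_comm {m n : ℕ} (X Y : Matrix (Fin m) (Fin n) ℂ) :
    innerM Y X = star (innerM X Y) := by
  rw [innerM, innerM, ← trace_conjTranspose, conjTranspose_mul, conjTranspose_conjTranspose]

def skewDiag (ns a : ℕ) : Finset (Fin ns × Fin ns) :=
  Finset.univ.filter fun p => (p.1 : ℕ) + p.2 = a

lemma innerM_hankelBasis (M : Matrix (Fin ns) (Fin ns) ℂ) (a : ℕ) :
    innerM M (hankelBasis ns a)
      = ((1 / Real.sqrt (hw ns a) : ℝ) : ℂ) * ∑ p ∈ skewDiag ns a, star (M p.1 p.2) := by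
  simp only [innerM, trace, diag, mul_apply, conjTranspose_apply]
  rw [Finset.mul_sum, skewDiag, Finset.sum_filter, ← Finset.univ_product_univ,
    Finset.sum_product_right]
  refine Finset.sum_congr rfl fun j _ => Finset.sum_congr rfl fun i _ => ?_
  by_cases h : (i : ℕ) + j = a <;> simp [hankelBasis, h, mul_comm]

lemma norm_innerM_hankelBasis_sq_le (M : Matrix (Fin ns) (Fin ns) ℂ) (a : ℕ) :
    ‖innerM M (hankelBasis ns a)‖ ^ 2 ≤ ∑ p ∈ skewDiag ns a, ‖M p.1 p.2‖ ^ 2 := by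
  have hcard : (skewDiag ns a).card = hw ns a := rfl
  have hsum : ‖∑ p ∈ skewDiag ns a, star (M p.1 p.2)‖ ≤ ∑ p ∈ skewDiag ns a, ‖M p.1 p.2‖ :=
    (norm_sum_le _ _).trans_eq (by simp only [norm_star])
  -- Cauchy–Schwarz against the `hw ns a` entries of the diagonal cancels the normalisation.
  have hCS := sq_sum_le_card_mul_sum_sq (s := skewDiag ns a) (f := fun p => ‖M p.1 p.2‖)
  rw [hcard] at hCS
  rw [innerM_hankelBasis, norm_mul, Complex.norm_real, Real.norm_of_nonneg (by positivity),
    mul_pow, div_pow, one_pow, Real.sq_sqrt (Nat.cast_nonneg _)]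
  rcases (Nat.cast_nonneg (α := ℝ) (hw ns a)).eq_or_lt with hw0 | hwpos
  · rw [← hw0, div_zero, zero_mul]
    positivity
  · rw [one_div_mul_eq_div, div_le_iff₀' hwpos]
    exact (pow_le_pow_left₀ (norm_nonneg _) hsum 2).trans hCS

lemma sum_skewDiag_fst_le {f : Fin ns → ℝ} (hf : ∀ i, 0 ≤ f i) (a : ℕ) :
    ∑ p ∈ skewDiag ns a, f p.1 ≤ ∑ i, f i := by
  have hinj : Set.InjOn Prod.fst (skewDiag ns a : Set (Fin ns × Fin ns)) := by
    intro p hp q hq h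
    simp only [skewDiag, Finset.coe_filter, Finset.mem_univ, true_and, Set.mem_ofPred_eq] at hp hq
    exact Prod.ext h (Fin.ext (by rw [h] at hp; omega))
  rw [← Finset.sum_image hinj]
  exact Finset.sum_le_sum_of_subset_of_nonneg (Finset.subset_univ _) fun i _ _ => hf i

lemma sum_skewDiag_norm_sq_le_frobNorm_mul_norm2inf (A B : Matrix (Fin ns) (Fin r) ℂ) (a : ℕ) :
    ∑ p ∈ skewDiag ns a, ‖(A * Bᵀ) p.1 p.2‖ ^ 2 ≤ (frobNorm A * norm2inf B) ^ 2 := by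
  have hentry : ∀ i j, ‖(A * Bᵀ) i j‖ ^ 2 ≤ vecNorm (A i) ^ 2 * norm2inf B ^ 2 := fun i j => by
    rw [← mul_pow]
    exact pow_le_pow_left₀ (norm_nonneg _) ((norm_mul_transpose_apply_le A B i j).trans
      (mul_le_mul_of_nonneg_left (vecNorm_le_norm2inf B j) (Real.sqrt_nonneg _))) 2
  calc ∑ p ∈ skewDiag ns a, ‖(A * Bᵀ) p.1 p.2‖ ^ 2
      ≤ ∑ p ∈ skewDiag ns a, vecNorm (A p.1) ^ 2 * norm2inf B ^ 2 :=
        Finset.sum_le_sum fun p _ => hentry p.1 p.2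
    _ ≤ ∑ i, vecNorm (A i) ^ 2 * norm2inf B ^ 2 :=
        sum_skewDiag_fst_le (f := fun i => vecNorm (A i) ^ 2 * norm2inf B ^ 2)
          (fun _ => by positivity) a
    _ = (frobNorm A * norm2inf B) ^ 2 := by rw [← Finset.sum_mul, ← frobNorm_sq, mul_pow]

lemma sum_skewDiag_norm_sq_swap (A B : Matrix (Fin ns) (Fin r) ℂ) (a : ℕ) :
    ∑ p ∈ skewDiag ns a, ‖(A * Bᵀ) p.1 p.2‖ ^ 2
      = ∑ p ∈ skewDiag ns a, ‖(B * Aᵀ) p.1 p.2‖ ^ 2 := by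
  refine Finset.sum_nbij' Prod.swap Prod.swap ?_ ?_ (fun _ _ => rfl) (fun _ _ => rfl) ?_
  · simp [skewDiag, add_comm]
  · simp [skewDiag, add_comm]
  · intro p _
    rw [← transpose_apply (B * Aᵀ), transpose_mul, transpose_transpose]
    rfl

lemma norm_innerM_mul_transpose_hankelBasis_le (A B : Matrix (Fin ns) (Fin r) ℂ) (a : ℕ) :
    ‖innerM (A * Bᵀ) (hankelBasis ns a)‖
      ≤ min (frobNorm A * norm2inf B) (norm2inf A * frobNorm B) := by
  refine le_min ?_ ?_ <;> refine (pow_le_pow_iff_left₀ (norm_nonneg _) ?_ two_ne_zero).1 ?_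
  · exact mul_nonneg (Real.sqrt_nonneg _) (norm2inf_nonneg B)
  · exact (norm_innerM_hankelBasis_sq_le _ a).trans
      (sum_skewDiag_norm_sq_le_frobNorm_mul_norm2inf A B a)
  · exact mul_nonneg (norm2inf_nonneg A) (Real.sqrt_nonneg _)
  · rw [mul_comm]
    exact (norm_innerM_hankelBasis_sq_le _ a).trans ((sum_skewDiag_norm_sq_swap A B a).trans_le
      (sum_skewDiag_norm_sq_le_frobNorm_mul_norm2inf B A a))

end HankelCoefficients

lemma Finset.card_filter_le_card_filter_add_card_filter {β : Type*} (s : Finset β)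
    {P Q R : β → Prop} [DecidablePred P] [DecidablePred Q] [DecidablePred R]
    (h : ∀ x ∈ s, P x → Q x ∨ R x) :
    (s.filter P).card ≤ (s.filter Q).card + (s.filter R).card := by
  calc (s.filter P).card ≤ (s.filter fun x => Q x ∨ R x).card :=
        Finset.card_le_card (Finset.monotone_filter_right s h)
    _ ≤ _ := by rw [Finset.filter_or]; exact Finset.card_union_le _ _

section Hoeffding

variable {α : Type*} [Fintype α]

lemma Real.exp_le_one_add_add_sq {x : ℝ} (hx : |x| ≤ 1) : Real.exp x ≤ 1 + x + x ^ 2 := by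
  linarith [(abs_le.1 (Real.abs_exp_sub_one_sub_id_le hx)).2]

lemma sum_exp_mul_le_of_sum_eq_zero {g : α → ℝ} {B L : ℝ} (hg : ∀ a, |g a| ≤ B)
    (hsum : ∑ a, g a = 0) (hLB : |L| * B ≤ 1) :
    ∑ a, Real.exp (L * g a) ≤ Fintype.card α * Real.exp (L ^ 2 * B ^ 2) := by
  have hsq : ∀ a, (L * g a) ^ 2 ≤ L ^ 2 * B ^ 2 := fun a =>
    calc (L * g a) ^ 2 = L ^ 2 * |g a| ^ 2 := by rw [mul_pow, sq_abs]
      _ ≤ L ^ 2 * B ^ 2 := by gcongr; exact hg a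
  calc ∑ a, Real.exp (L * g a) ≤ ∑ a, (1 + L * g a + L ^ 2 * B ^ 2) :=
        Finset.sum_le_sum fun a _ => (Real.exp_le_one_add_add_sq (by
          rw [abs_mul]; exact (mul_le_mul_of_nonneg_left (hg a) (abs_nonneg L)).trans hLB)).trans
          (by linarith [hsq a])
    _ = Fintype.card α * (1 + L ^ 2 * B ^ 2) := by
        rw [Finset.sum_add_distrib, Finset.sum_add_distrib, ← Finset.mul_sum, hsum]
        simp only [Finset.sum_const, Finset.card_univ, nsmul_eq_mul]
        ring
    _ ≤ Fintype.card α * Real.exp (L ^ 2 * B ^ 2) := by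
        gcongr
        linarith [Real.add_one_le_exp (L ^ 2 * B ^ 2)]

lemma card_filter_sum_comp_ge_le {m : ℕ} (hm : 0 < m) {g : α → ℝ} {B s : ℝ} (hB : 0 < B)
    (hg : ∀ a, |g a| ≤ B) (hsum : ∑ a, g a = 0) (hs : 0 ≤ s) (hsB : s ≤ 2 * m * B) :
    ((Finset.univ.filter fun ω : Fin m → α => s ≤ ∑ k, g (ω k)).card : ℝ)
      ≤ Fintype.card α ^ m * Real.exp (-s ^ 2 / (4 * m * B ^ 2)) := by
  -- `L` minimises the exponent `m L² B² - L s` below.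
  set L : ℝ := s / (2 * m * B ^ 2)
  have hL : 0 ≤ L := by positivity
  have hLB : |L| * B ≤ 1 := by
    rw [abs_of_nonneg hL, div_mul_eq_mul_div, div_le_one (by positivity)]
    nlinarith
  have hmarkov : ((Finset.univ.filter fun ω : Fin m → α => s ≤ ∑ k, g (ω k)).card : ℝ)
      * Real.exp (L * s) ≤ ∑ ω : Fin m → α, Real.exp (L * ∑ k, g (ω k)) := by
    rw [← nsmul_eq_mul]
    refine (Finset.card_nsmul_le_sum _ _ _ fun ω hω => ?_).trans
      (Finset.sum_le_sum_of_subset_of_nonneg (Finset.filter_subset _ _)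
        fun _ _ _ => (Real.exp_pos _).le)
    exact Real.exp_le_exp.2 (mul_le_mul_of_nonneg_left (Finset.mem_filter.1 hω).2 hL)
  -- the exponential moment of a sum of independent samples factorises
  have hfactor : ∑ ω : Fin m → α, Real.exp (L * ∑ k, g (ω k))
      = (∑ a, Real.exp (L * g a)) ^ m := by
    rw [Fintype.sum_pow]
    exact Finset.sum_congr rfl fun ω _ => by rw [Finset.mul_sum, Real.exp_sum]
  have hexponent : m * (L ^ 2 * B ^ 2) - L * s = -s ^ 2 / (4 * m * B ^ 2) := by
    simp only [L]
    field_simp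
    ring
  calc _ ≤ (∑ ω : Fin m → α, Real.exp (L * ∑ k, g (ω k))) / Real.exp (L * s) :=
        (le_div_iff₀ (Real.exp_pos _)).2 hmarkov
    _ = (∑ a, Real.exp (L * g a)) ^ m / Real.exp (L * s) := by rw [hfactor]
    _ ≤ (Fintype.card α * Real.exp (L ^ 2 * B ^ 2)) ^ m / Real.exp (L * s) := by
        gcongr
        exact sum_exp_mul_le_of_sum_eq_zero hg hsum hLB
    _ = Fintype.card α ^ m * Real.exp (-s ^ 2 / (4 * m * B ^ 2)) := by
        rw [← hexponent, mul_pow, ← Real.exp_nat_mul, Real.exp_sub, mul_div_assoc]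

lemma card_filter_abs_sum_comp_ge_le {m : ℕ} (hm : 0 < m) {g : α → ℝ} {B s : ℝ} (hB : 0 < B)
    (hg : ∀ a, |g a| ≤ B) (hsum : ∑ a, g a = 0) (hs : 0 ≤ s) (hsB : s ≤ 2 * m * B) :
    ((Finset.univ.filter fun ω : Fin m → α => s ≤ |∑ k, g (ω k)|).card : ℝ)
      ≤ 2 * (Fintype.card α ^ m * Real.exp (-s ^ 2 / (4 * m * B ^ 2))) := by
  have hsplit := Finset.card_filter_le_card_filter_add_card_filter Finset.univ
    (P := fun ω : Fin m → α => s ≤ |∑ k, g (ω k)|) (Q := fun ω => s ≤ ∑ k, g (ω k))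
    (R := fun ω => s ≤ ∑ k, (-g) (ω k)) fun ω _ hω => by
      simpa only [Pi.neg_apply, Finset.sum_neg_distrib] using le_abs.1 hω
  have hpos := card_filter_sum_comp_ge_le hm hB hg hsum hs hsB
  have hneg := card_filter_sum_comp_ge_le hm (g := -g) hB (fun a => by simpa using hg a)
    (by simp [hsum]) hs hsB
  rw [two_mul]
  exact (Nat.cast_le.2 hsplit).trans (by push_cast; exact add_le_add hpos hneg)

lemma card_filter_norm_sum_comp_ge_le {m : ℕ} (hm : 0 < m) {Y : α → ℂ} {B s : ℝ} (hB : 0 < B)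
    (hY : ∀ a, ‖Y a‖ ≤ B) (hsum : ∑ a, Y a = 0) (hs : 0 ≤ s) (hsB : s ≤ 2 * m * B) :
    ((Finset.univ.filter fun ω : Fin m → α => 2 * s ≤ ‖∑ k, Y (ω k)‖).card : ℝ)
      ≤ 4 * (Fintype.card α ^ m * Real.exp (-s ^ 2 / (4 * m * B ^ 2))) := by
  have hsplit := Finset.card_filter_le_card_filter_add_card_filter Finset.univ
    (P := fun ω : Fin m → α => 2 * s ≤ ‖∑ k, Y (ω k)‖)
    (Q := fun ω => s ≤ |∑ k, (Y (ω k)).re|) (R := fun ω => s ≤ |∑ k, (Y (ω k)).im|)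
    fun ω _ hω => by
      have := hω.trans (Complex.norm_le_abs_re_add_abs_im _)
      rw [Complex.re_sum, Complex.im_sum] at this
      by_contra! h
      linarith [h.1, h.2]
  have hre := card_filter_abs_sum_comp_ge_le hm hB
    (fun a => (Complex.abs_re_le_norm _).trans (hY a))
    (by rw [← Complex.re_sum, hsum, Complex.zero_re]) hs hsB
  have him := card_filter_abs_sum_comp_ge_le hm hB
    (fun a => (Complex.abs_im_le_norm _).trans (hY a))
    (by rw [← Complex.im_sum, hsum, Complex.zero_im]) hs hsB
  exact (Nat.cast_le.2 hsplit).trans (by push_cast; linarith)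

end Hoeffding

section Sampling
variable {α : Type*} [Fintype α]

/-- For `X a = ⟨ABᵀ, H_a⟩⟨H_a, CDᵀ⟩` this is the paper's `⟨𝒢(p⁻¹P_Ω̂ − I)𝒢*(ABᵀ), CDᵀ⟩`. -/
def samplingError {m : ℕ} (X : α → ℂ) (ω : Fin m → α) : ℂ :=
  (Fintype.card α / m : ℂ) * ∑ k, X (ω k) - ∑ a, X a

lemma samplingError_eq_mul_sum_sub_mean {m : ℕ} (hn : Fintype.card α ≠ 0) (hm : m ≠ 0)
    (X : α → ℂ) (ω : Fin m → α) :
    samplingError X ω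
      = (Fintype.card α / m : ℂ) * ∑ k, (X (ω k) - (∑ a, X a) / Fintype.card α) := by
  rw [samplingError, Finset.sum_sub_distrib, Finset.sum_const, Finset.card_univ, Fintype.card_fin,
    nsmul_eq_mul]
  field_simp

lemma sum_sub_mean_eq_zero (hn : Fintype.card α ≠ 0) (X : α → ℂ) :
    ∑ a, (X a - (∑ a, X a) / Fintype.card α) = 0 := by
  rw [Finset.sum_sub_distrib, Finset.sum_const, Finset.card_univ, nsmul_eq_mul]
  field_simp
  ring

lemma norm_sub_mean_le {X : α → ℂ} {b : ℝ} (hX : ∀ a, ‖X a‖ ≤ b) (a : α) :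
    ‖X a - (∑ a, X a) / Fintype.card α‖ ≤ 2 * b := by
  have hn : (0 : ℝ) < Fintype.card α := by exact_mod_cast Fintype.card_pos_iff.2 ⟨a⟩
  have hmean : ‖(∑ a, X a) / Fintype.card α‖ ≤ b := by
    rw [norm_div, Complex.norm_natCast, div_le_iff₀ hn]
    exact (norm_sum_le _ _).trans
      ((Finset.sum_le_sum fun a _ => hX a).trans_eq (by simp [mul_comm]))
  linarith [norm_sub_le (X a) ((∑ a, X a) / Fintype.card α), hX a]

lemma card_filter_norm_samplingError_gt_le {m : ℕ} (hn : 1 < Fintype.card α)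
    (hm : 4 * Real.log (Fintype.card α) ≤ m) {X : α → ℂ} {b : ℝ} (hb : 0 ≤ b)
    (hX : ∀ a, ‖X a‖ ≤ b) :
    ((Finset.univ.filter fun ω : Fin m → α => 16 * Real.sqrt ((Fintype.card α : ℝ) ^ 2
        * Real.log (Fintype.card α) / m) * b < ‖samplingError X ω‖).card : ℝ)
      ≤ 4 * (Fintype.card α ^ m * ((Fintype.card α : ℝ) ^ 4)⁻¹) := by
  set n := Fintype.card α
  have hn2 : (2 : ℝ) ≤ n := by exact_mod_cast hn
  have hlog : 0 < Real.log n := Real.log_pos (by linarith)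
  have hm0 : (0 : ℝ) < m := by linarith
  rcases hb.eq_or_lt with rfl | hb
  · have hX0 : X = 0 := funext fun a => norm_le_zero_iff.1 (hX a)
    rw [Finset.filter_false_of_mem fun ω _ => by simp [hX0, samplingError]]
    simp only [Finset.card_empty, Nat.cast_zero]
    positivity
  set Y : α → ℂ := fun a => X a - (∑ a, X a) / n
  set ρ := Real.sqrt (Real.log n / m)
  have hρ : ρ ^ 2 = Real.log n / m := Real.sq_sqrt (by positivity)
  have hρ_le : ρ ≤ 1 / 2 := by
    rw [Real.sqrt_le_left (by norm_num), div_le_iff₀ hm0]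
    linarith
  -- `s` is chosen so that the Hoeffding exponent `s² / (4 m (2b)²)` is exactly `4 log n`.
  set s := 8 * b * m * ρ
  have hexp : Real.exp (-s ^ 2 / (4 * m * (2 * b) ^ 2)) = ((n : ℝ) ^ 4)⁻¹ := by
    rw [show -s ^ 2 / (4 * m * (2 * b) ^ 2) = -(4 * Real.log n) by
      simp only [s]; rw [mul_pow, hρ]; field_simp; ring]
    rw [Real.exp_neg, ← Real.log_rpow (by linarith), Real.exp_log (by positivity)]
    norm_cast
  have hbad := card_filter_norm_sum_comp_ge_le (s := s) (by exact_mod_cast hm0)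
    (by linarith : 0 < 2 * b) (norm_sub_mean_le hX) (sum_sub_mean_eq_zero (by omega) X)
    (by positivity)
    ((mul_le_mul_of_nonneg_left hρ_le (by positivity : (0 : ℝ) ≤ 8 * b * m)).trans_eq (by ring))
  rw [hexp] at hbad
  have hthreshold : 16 * Real.sqrt ((n : ℝ) ^ 2 * Real.log n / m) * b = (n / m) * (2 * s) := by
    simp only [s, ρ]
    rw [mul_div_assoc, Real.sqrt_mul (by positivity), Real.sqrt_sq (by positivity)]
    field_simp
    ring
  refine le_trans (Nat.cast_le.2 (Finset.card_le_card
    (Finset.monotone_filter_right _ fun ω _ hω => ?_))) hbad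
  rw [hthreshold, samplingError_eq_mul_sum_sub_mean (by omega) (by exact_mod_cast hm0.ne'),
    norm_mul, norm_div, Complex.norm_natCast, Complex.norm_natCast] at hω
  exact (lt_of_mul_lt_mul_left hω (by positivity)).le

lemma card_filter_norm_samplingError_le_ge {m : ℕ} (hn : 1 < Fintype.card α)
    (hm : 4 * Real.log (Fintype.card α) ≤ m) {X : α → ℂ} {b : ℝ} (hb : 0 ≤ b)
    (hX : ∀ a, ‖X a‖ ≤ b) :
    (1 - ((Fintype.card α : ℝ) ^ 2)⁻¹) * Fintype.card (Fin m → α)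
      ≤ ((Finset.univ.filter fun ω : Fin m → α => ‖samplingError X ω‖
          ≤ 16 * Real.sqrt ((Fintype.card α : ℝ) ^ 2 * Real.log (Fintype.card α) / m) * b).card
          : ℝ) := by
  have hn2 : (2 : ℝ) ≤ Fintype.card α := by exact_mod_cast hn
  have hsplit := Finset.card_filter_add_card_filter_not (s := Finset.univ)
    fun ω : Fin m → α => ‖samplingError X ω‖
      ≤ 16 * Real.sqrt ((Fintype.card α : ℝ) ^ 2 * Real.log (Fintype.card α) / m) * b
  simp only [not_le, Finset.card_univ] at hsplit
  have hbad := card_filter_norm_samplingError_gt_le (m := m) hn hm hb hX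
  have hsmall : 4 * ((Fintype.card α : ℝ) ^ 4)⁻¹ ≤ ((Fintype.card α : ℝ) ^ 2)⁻¹ := by
    field_simp
    nlinarith
  rw [← Nat.cast_inj (R := ℝ), Nat.cast_add, Fintype.card_fun, Fintype.card_fin,
    Nat.cast_pow] at hsplit
  rw [Fintype.card_fun, Fintype.card_fin, Nat.cast_pow]
  nlinarith [pow_pos (by linarith : (0 : ℝ) < Fintype.card α) m]

end Sampling

/-- Lemma 8 (Hankel sampling concentration), with i.i.d. uniform sampling
expressed by counting uniform tuples `ω : Fin m → Fin n`. -/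
theorem hankel_sampling_concentration :
    ∃ c₄ c₅ : ℝ, 0 < c₄ ∧ 0 < c₅ ∧
      ∀ ns r n : ℕ, 1 ≤ ns → 1 ≤ r → n = 2 * ns - 1 →
      ∀ m : ℕ, c₅ * Real.log n ≤ m →
      ∀ A B C D : Matrix (Fin ns) (Fin r) ℂ,
      ((Finset.univ.filter (fun ω : Fin m → Fin n =>
          ‖(((n : ℂ) / (m : ℂ))
                * ∑ k : Fin m, innerM (A * Bᵀ) (hankelBasis ns (ω k))
                    * innerM (hankelBasis ns (ω k)) (C * Dᵀ)
              - ∑ a : Fin n, innerM (A * Bᵀ) (hankelBasis ns a)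
                    * innerM (hankelBasis ns a) (C * Dᵀ))‖
            ≤ c₄ * Real.sqrt ((n : ℝ) ^ 2 * Real.log n / m)
                * min (frobNorm A * norm2inf B) (norm2inf A * frobNorm B)
                * min (frobNorm C * norm2inf D) (norm2inf C * frobNorm D))).card : ℝ)
        ≥ (1 - ((n : ℝ) ^ (2 : ℕ))⁻¹) * Fintype.card (Fin m → Fin n) := by
  refine ⟨16, 4, by norm_num, by norm_num, ?_⟩
  intro ns r n hns _ hn m hm A B C D
  have hbound : ∀ a : Fin n,
      ‖innerM (A * Bᵀ) (hankelBasis ns a) * innerM (hankelBasis ns a) (C * Dᵀ)‖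
        ≤ min (frobNorm A * norm2inf B) (norm2inf A * frobNorm B)
          * min (frobNorm C * norm2inf D) (norm2inf C * frobNorm D) := fun a => by
    rw [norm_mul, innerM_comm (C * Dᵀ), norm_star]
    exact mul_le_mul (norm_innerM_mul_transpose_hankelBasis_le A B a)
      (norm_innerM_mul_transpose_hankelBasis_le C D a) (norm_nonneg _)
      ((norm_nonneg _).trans (norm_innerM_mul_transpose_hankelBasis_le A B a))
  obtain rfl | hn2 : n = 1 ∨ 1 < n := by omega
  · simp
  · have := card_filter_norm_samplingError_le_ge (m := m) (by simpa using hn2)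
      (by simpa using hm) ((norm_nonneg _).trans (hbound ⟨0, by omega⟩)) hbound
    simpa only [samplingError, Fintype.card_fin, mul_assoc] using this
end
end
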